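/- If T and T' are bicentroidal free trees with fws(T) = fws(T'), then T and T' are isomorphic as free trees. -/

import Mathlib

/-!
A rooted tree is recovered from its weight sequence, and since the first entry of a weight
sequence is its length, `fws` splits uniquely into the weight sequences of the two halves.
So `T` and `T'` have rooted-isomorphic halves. Cutting the bridge `uv` of a tree exhibits it as
the disjoint union of its halves joined by the edge between the roots, and the isomorphisms of
the halves glue along that edge.
-/

inductive OTree : Type
  | node : List OTree → OTree

namespace OTree

def size : OTree → ℕ
  | .node cs => (cs.attach.map (fun c => size c.1)).sum + 1
decreasing_by simp only [OTree.node.sizeOf_spec]; have := List.sizeOf_lt_of_mem c.2; omega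

def ws : OTree → List ℕ
  | .node cs => size (.node cs) :: (cs.attach.map (fun c => ws c.1)).flatten
decreasing_by simp only [OTree.node.sizeOf_spec]; have := List.sizeOf_lt_of_mem c.2; omega

def preorder : OTree → List OTree
  | .node cs => .node cs :: (cs.attach.map (fun c => preorder c.1)).flatten
decreasing_by simp only [OTree.node.sizeOf_spec]; have := List.sizeOf_lt_of_mem c.2; omega

lemma size_pos (R : OTree) : 0 < R.size := by
  cases R with | node cs => simp only [OTree.size]; omega

end OTree

inductive RIso : OTree → OTree → Prop
  | node {cs cs' : List OTree} (l : List OTree) (hp : l.Perm cs')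
      (hlen : cs.length = l.length)
      (h : ∀ (i : ℕ) (h1 : i < cs.length) (h2 : i < l.length), RIso cs[i] l[i]) :
      RIso (.node cs) (.node cs')

inductive Canonical : OTree → Prop
  | node {cs : List OTree}
      (hchain : List.Chain' (fun u v => OTree.ws v ≤ OTree.ws u) cs)
      (h : ∀ c ∈ cs, Canonical c) : Canonical (.node cs)

def Centroidal {V : Type} [Fintype V] (G : SimpleGraph V) (u : V) : Prop :=
  ∀ v : ↥{x : V | x ≠ u},
    2 * Nat.card {w : ↥{x : V | x ≠ u} | (G.induce {x : V | x ≠ u}).Reachable v w}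
      ≤ Fintype.card V

def IsParent (w : List ℕ) (i j : ℕ) : Prop :=
  i < j ∧ j < i + w.getD i 0 ∧ ∀ k, i < k → k < j → ¬ (j < k + w.getD k 0)

def graphOf (R : OTree) : SimpleGraph (Fin R.size) :=
  SimpleGraph.fromRel (fun i j => IsParent R.ws i.1 j.1)

def rootIdx (R : OTree) : Fin R.size := ⟨0, R.size_pos⟩

def B (n : ℕ) : Set (List ℕ) := {s | ∃ R : OTree, Canonical R ∧ R.size = n ∧ R.ws = s}

def Succeq (s t : List ℕ) : Prop := t ≤ s ∨ s <+: t

def A (q n : ℕ) : Set (List ℕ × List ℕ) :=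
  {p | p.1 ∈ B q ∧ p.2 ∈ B (n - q) ∧ Succeq p.1 p.2.tail}

def FwsUni {V : Type} [Fintype V] (G : SimpleGraph V) (s : List ℕ) : Prop :=
  ∃ R : OTree, Canonical R ∧ R.ws = s ∧
    ∃ f : graphOf R ≃g G, Centroidal G (f (rootIdx R))

def FwsBi {V : Type} [Fintype V] (G : SimpleGraph V) (s : List ℕ) : Prop :=
  ∃ u v, u ≠ v ∧ G.Adj u v ∧ Centroidal G u ∧ Centroidal G v ∧
  ∃ A B : OTree, Canonical A ∧ Canonical B ∧ B.ws ≤ A.ws ∧ s = A.ws ++ B.ws ∧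
  ∃ (fA : graphOf A ≃g (G.deleteEdges {s(u,v)}).induce
        {x | (G.deleteEdges {s(u,v)}).Reachable u x})
    (fB : graphOf B ≃g (G.deleteEdges {s(u,v)}).induce
        {x | (G.deleteEdges {s(u,v)}).Reachable v x}),
    (fA (rootIdx A)).1 = u ∧ (fB (rootIdx B)).1 = v

namespace OTree

lemma size_node (cs : List OTree) : size (.node cs) = (cs.map size).sum + 1 := by
  rw [size, List.attach_map_val]

lemma ws_node (cs : List OTree) : ws (.node cs) = size (.node cs) :: (cs.map ws).flatten := by
  rw [ws, List.attach_map_val]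

lemma length_ws : ∀ R : OTree, R.ws.length = R.size
  | .node cs => by
    rw [ws_node, size_node, List.length_cons, List.length_flatten, List.map_map]
    congr 2
    exact List.map_congr_left fun c hc => length_ws c
decreasing_by simp only [OTree.node.sizeOf_spec]; have := List.sizeOf_lt_of_mem hc; omega

lemma head?_ws (R : OTree) : R.ws.head? = some R.size := by
  cases R with | node cs => rw [ws_node]; rfl

lemma ws_ne_nil (R : OTree) : R.ws ≠ [] := by
  cases R with | node cs => rw [ws_node]; exact List.cons_ne_nil _ _

/-- Weight sequences form a prefix code: the first entry of `R.ws` is its length. -/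
lemma ws_eq_and_eq_of_ws_append_eq {R R' : OTree} {l l' : List ℕ}
    (h : R.ws ++ l = R'.ws ++ l') : R.ws = R'.ws ∧ l = l' := by
  have hsize : R.size = R'.size := by
    simpa [List.head?_append, head?_ws] using congrArg List.head? h
  exact List.append_inj h (by rw [length_ws, length_ws, hsize])

lemma eq_of_flatten_map_ws_eq {cs cs' : List OTree}
    (hinj : ∀ c ∈ cs, ∀ t : OTree, c.ws = t.ws → c = t)
    (h : (cs.map ws).flatten = (cs'.map ws).flatten) : cs = cs' := by
  induction cs generalizing cs' with
  | nil =>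
    cases cs' with
    | nil => rfl
    | cons c' cs' => simp [ws_ne_nil] at h
  | cons c cs ih =>
    cases cs' with
    | nil => simp [ws_ne_nil] at h
    | cons c' cs' =>
      simp only [List.map_cons, List.flatten_cons] at h
      obtain ⟨hc, hcs⟩ := ws_eq_and_eq_of_ws_append_eq h
      rw [hinj c List.mem_cons_self c' hc, ih (fun x hx => hinj x (List.mem_cons_of_mem c hx)) hcs]

theorem ws_injective : ∀ {R R' : OTree}, R.ws = R'.ws → R = R'
  | .node cs, .node cs', h => by
    rw [ws_node, ws_node, List.cons.injEq] at h
    rw [eq_of_flatten_map_ws_eq (fun c hc t ht => ws_injective ht) h.2]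
decreasing_by simp only [OTree.node.sizeOf_spec]; have := List.sizeOf_lt_of_mem hc; omega

lemma eq_and_eq_of_ws_append_ws_eq {A B A' B' : OTree} (h : A.ws ++ B.ws = A'.ws ++ B'.ws) :
    A = A' ∧ B = B' :=
  (ws_eq_and_eq_of_ws_append_eq h).imp ws_injective ws_injective

end OTree

namespace SimpleGraph

variable {V V' : Type*} {G : SimpleGraph V} {G' : SimpleGraph V'}

def Iso.supEdge (f : G ≃g G') {a b : V} {a' b' : V'} (ha : f a = a') (hb : f b = b') :
    G ⊔ edge a b ≃g G' ⊔ edge a' b' where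
  toEquiv := f.toEquiv
  map_rel_iff' {x y} := by
    subst ha hb
    simp [sup_adj, edge_adj, f.map_adj_iff, f.injective.eq_iff]

variable {u v : V}

abbrev branch (G : SimpleGraph V) (u v w : V) :
    SimpleGraph {x | (G.deleteEdges {s(u, v)}).Reachable w x} :=
  (G.deleteEdges {s(u, v)}).induce {x | (G.deleteEdges {s(u, v)}).Reachable w x}

lemma Preconnected.reachable_deleteEdges_or (hG : G.Preconnected) (x : V) :
    (G.deleteEdges {s(u, v)}).Reachable u x ∨ (G.deleteEdges {s(u, v)}).Reachable v x := by
  induction (reachable_iff_reflTransGen u x).mp (hG u x) with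
  | refl => exact .inl .rfl
  | @tail y z _ hyz ih =>
    by_cases he : s(y, z) = s(u, v)
    · rcases Sym2.eq_iff.mp he with ⟨rfl, rfl⟩ | ⟨rfl, rfl⟩
      · exact .inr .rfl
      · exact .inl .rfl
    · have hD : (G.deleteEdges {s(u, v)}).Adj y z := by simp [hyz, he]
      exact ih.imp (·.trans hD.reachable) (·.trans hD.reachable)

lemma IsBridge.adj_iff_deleteEdges_adj (hb : G.IsBridge s(u, v)) {w x y : V}
    (hx : (G.deleteEdges {s(u, v)}).Reachable w x) (hy : (G.deleteEdges {s(u, v)}).Reachable w y) :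
    G.Adj x y ↔ (G.deleteEdges {s(u, v)}).Adj x y := by
  refine ⟨fun h => ?_, fun h => (deleteEdges_adj.mp h).1⟩
  refine deleteEdges_adj.mpr ⟨h, fun he => hb ?_⟩
  rcases Sym2.eq_iff.mp he with ⟨rfl, rfl⟩ | ⟨rfl, rfl⟩
  · exact hx.symm.trans hy
  · exact hy.symm.trans hx

lemma IsBridge.adj_iff_of_reachable (huv : G.Adj u v) (hb : G.IsBridge s(u, v)) {x y : V}
    (hx : (G.deleteEdges {s(u, v)}).Reachable u x) (hy : (G.deleteEdges {s(u, v)}).Reachable v y) :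
    G.Adj x y ↔ x = u ∧ y = v := by
  refine ⟨fun h => ?_, by rintro ⟨rfl, rfl⟩; exact huv⟩
  by_contra hne
  have hD : (G.deleteEdges {s(u, v)}).Adj x y := by
    refine deleteEdges_adj.mpr ⟨h, fun he => ?_⟩
    rcases Sym2.eq_iff.mp he with ⟨rfl, rfl⟩ | ⟨rfl, rfl⟩
    · exact hne ⟨rfl, rfl⟩
    · exact hb hy.symm
  exact hb (hx.trans (hD.reachable.trans hy.symm))

noncomputable def IsBridge.sumSupEdgeIso (hG : G.Preconnected) (huv : G.Adj u v)
    (hb : G.IsBridge s(u, v)) :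
    (G.branch u v u ⊕g G.branch u v v) ⊔ edge (.inl ⟨u, .rfl⟩) (.inr ⟨v, .rfl⟩) ≃g G where
  toEquiv := Equiv.ofBijective (Sum.elim Subtype.val Subtype.val)
    ⟨Subtype.val_injective.sumElim Subtype.val_injective
      fun x y hxy => hb (x.2.trans (hxy ▸ y.2.symm)),
     fun x => (hG.reachable_deleteEdges_or x).elim (fun h => ⟨.inl ⟨x, h⟩, rfl⟩)
      fun h => ⟨.inr ⟨x, h⟩, rfl⟩⟩
  map_rel_iff' {a b} := by
    rcases a with ⟨x, hx⟩ | ⟨x, hx⟩ <;> rcases b with ⟨y, hy⟩ | ⟨y, hy⟩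
    · simpa [edge_adj] using hb.adj_iff_deleteEdges_adj hx hy
    · simp [hb.adj_iff_of_reachable huv hx hy, edge_adj]
    · simp [G.adj_comm x, hb.adj_iff_of_reachable huv hy hx, edge_adj, and_comm]
    · simpa [edge_adj] using hb.adj_iff_deleteEdges_adj hx hy

noncomputable def IsTree.sumSupEdgeIso (hG : G.IsTree) (huv : G.Adj u v) :
    (G.branch u v u ⊕g G.branch u v v) ⊔ edge (.inl ⟨u, .rfl⟩) (.inr ⟨v, .rfl⟩) ≃g G :=
  IsBridge.sumSupEdgeIso hG.1.preconnected huv (isAcyclic_iff_forall_adj_isBridge.mp hG.2 huv)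

end SimpleGraph

open SimpleGraph in
theorem stmt11 {V V' : Type} [Fintype V] [Fintype V']
    (G : SimpleGraph V) (G' : SimpleGraph V') (hG : G.IsTree) (hG' : G'.IsTree)
    (s : List ℕ) (h : FwsBi G s) (h' : FwsBi G' s) : Nonempty (G ≃g G') := by
  obtain ⟨u, v, -, huv, -, -, A, B, -, -, -, rfl, fA, fB, hfA, hfB⟩ := h
  obtain ⟨u', v', -, huv', -, -, A', B', -, -, -, hs, fA', fB', hfA', hfB'⟩ := h'
  obtain ⟨rfl, rfl⟩ := OTree.eq_and_eq_of_ws_append_ws_eq hs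
  let gA : G.branch u v u ≃g G'.branch u' v' u' := fA.symm.trans fA'
  let gB : G.branch u v v ≃g G'.branch u' v' v' := fB.symm.trans fB'
  have hu : gA ⟨u, .rfl⟩ = ⟨u', .rfl⟩ := by
    rw [← show fA (rootIdx A) = ⟨u, .rfl⟩ from Subtype.ext hfA]
    exact Subtype.ext (by simpa [gA] using hfA')
  have hv : gB ⟨v, .rfl⟩ = ⟨v', .rfl⟩ := by
    rw [← show fB (rootIdx B) = ⟨v, .rfl⟩ from Subtype.ext hfB]
    exact Subtype.ext (by simpa [gB] using hfB')
  exact ⟨(hG.sumSupEdgeIso huv).symm.trans <|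
    ((Iso.sumCongr gA gB).supEdge (by simp [hu]) (by simp [hv])).trans (hG'.sumSupEdgeIso huv')⟩
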